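/- Let α, β, k be real numbers with α > 0, β > −1 and 0 < k < β + 1. Let μ₀^{(α−1)} denote the matrix μ₀ of the context with α replaced by α − 1. Then μ₀^{(α−1)} = τ₀^{−1} μ₋₁ (τ₀^{−1})ᵀ, where τ₀^{−1} = [[1, 0], [1/(α+β−k+2), (α+β−k+1)/(α+β−k+2)]]. -/
import Mathlib

set_option maxHeartbeats 1000000

open Matrix

/-- The zeroth moment `μ₀` of the weight `W` of the `d = 2` Jacobi-type
example. -/
noncomputable def mu0 (α β k : ℝ) : Matrix (Fin 2) (Fin 2) ℝ :=
  (Real.Gamma (α + 1) * Real.Gamma (β + 2) * (α + β - k + 2) /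
      Real.Gamma (α + β + 3)) •
    !![1, 0; 0, (α + 1) * (k + 1) / ((α + β + 3) * (β - k + 1))]

/-- The `(-1)`-st moment `μ₋₁` of the weight `W` of the `d = 2` Jacobi-type
example. -/
noncomputable def muM1 (α β k : ℝ) : Matrix (Fin 2) (Fin 2) ℝ :=
  (Real.Gamma α * Real.Gamma (β + 2) / Real.Gamma (α + β + 2)) •
    !![α + β - k + 1, -1;
       -1, ((α + 1) * (k + 1) * (α + β - k + 2) - k * (β - k + 1)) /
         ((α + β + 2) * (β - k + 1))]

/-- The matrix `τ₀⁻¹` of the `d = 2` Jacobi-type example. -/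
noncomputable def tau0inv (α β k : ℝ) : Matrix (Fin 2) (Fin 2) ℝ :=
  !![1, 0; 1 / (α + β - k + 2), (α + β - k + 1) / (α + β - k + 2)]

/-- The relation `μ₀|_{α → α-1} = τ₀⁻¹ μ₋₁ (τ₀⁻¹)ᵀ`. -/
theorem stmt_14 (α β k : ℝ) (hα : 0 < α) (hβ : β > -1)
    (hk : 0 < k) (hkβ : k < β + 1) :
    mu0 (α - 1) β k = tau0inv α β k * muM1 α β k * (tau0inv α β k)ᵀ := by
  have h1 : (β - k + 1) ≠ 0 := by nlinarith
  have h2 : (α + β + 2) ≠ 0 := by nlinarith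
  have h3 : (α + β - k + 2) ≠ 0 := by nlinarith
  have hG : Real.Gamma (α + β + 2) ≠ 0 :=
    (Real.Gamma_pos_of_pos (by linarith)).ne'
  have ht : (tau0inv α β k)ᵀ =
      !![1, 1 / (α + β - k + 2); 0, (α + β - k + 1) / (α + β - k + 2)] := by
    ext i j
    fin_cases i <;> fin_cases j <;> simp [tau0inv]
  rw [ht]
  unfold mu0 muM1 tau0inv
  rw [show α - 1 + 1 = α from by ring, show α - 1 + β + 3 = α + β + 2 from by ring,
      show α - 1 + β - k + 2 = α + β - k + 1 from by ring]
  rw [Matrix.mul_smul, Matrix.smul_mul]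
  rw [Matrix.mul_fin_two, Matrix.mul_fin_two]
  ext i j
  fin_cases i <;> fin_cases j <;>
    simp [Matrix.smul_apply] <;> field_simp <;>
    first | ring1 | exact Or.inr (by ring)
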